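/- Fix n ≥ 3, 2 ≤ i ≤ n−1, and α, β ≥ 0 with α ≥ c/(1+δ). Let k ∉ {i−1, i, i+1}, and let x ∈ ℝ^n with y := Wx + θ satisfy: y_k = 0; y_i ≥ α; y_{i−1} ≤ β, y_{i+1} ≤ β; and y_j ≤ 0 for all j ∉ {i−1, i, i+1, k}. Then w_k^⊤(−x + [y]_+) ≤ 0, where w_k^⊤ is the k-th row of W. (Both cases are covered: if k has distance ≥ 2 from {i−1,i,i+1} then w_k^⊤(−x+[y]_+) = c + (−1−δ)([y_{i−1}]_+ + [y_i]_+ + [y_{i+1}]_+) ≤ c − (1+δ)α ≤ 0; if k = i+2, then w_k^⊤(−x+[y]_+) = c + (−1−δ)([y_{i−1}]_+ + [y_i]_+) + (−1+ε)[y_{i+1}]_+ ≤ c − (1+δ)α ≤ 0, and symmetrically for k = i−2.) -/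

import Mathlib

open Matrix

/-!
On the face `y_k = 0` the linear part of `w_kᵀ(-x + [y]₊)` equals `-(Wx)_k = c`, while every
off-diagonal weight of `W` is negative; since `k` is at distance at least two from `i`, the
rectified term alone contributes `(-1 - δ)[y_i]₊ ≤ -(1 + δ)α ≤ -c`.
-/

def cstlnMatrix (n : ℕ) (ε δ : ℝ) : Matrix (Fin n) (Fin n) ℝ :=
  Matrix.of fun k l =>
    if (k : ℕ) = (l : ℕ) then 0
    else if ((k : ℤ) - (l : ℤ)).natAbs = 1 then -1 + ε else -1 - δ

namespace cstlnMatrix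

variable {n : ℕ} {ε δ : ℝ}

theorem apply_nonpos (hε : ε ≤ 1) (hδ : -1 ≤ δ) (k l : Fin n) : cstlnMatrix n ε δ k l ≤ 0 := by
  simp only [cstlnMatrix, of_apply]
  split_ifs <;> linarith

theorem apply_of_two_le_natAbs {k l : Fin n} (h : 2 ≤ ((k : ℤ) - (l : ℤ)).natAbs) :
    cstlnMatrix n ε δ k l = -1 - δ := by
  have hkl : (k : ℕ) ≠ l := fun e => by simp [e] at h
  simp [cstlnMatrix, hkl, show ((k : ℤ) - (l : ℤ)).natAbs ≠ 1 by omega]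

end cstlnMatrix

theorem Matrix.sum_mul_neg_add {ι : Type*} [Fintype ι] (W : Matrix ι ι ℝ) (x r : ι → ℝ) (k : ι) :
    ∑ j, W k j * (-x j + r j) = -(W *ᵥ x) k + ∑ j, W k j * r j := by
  simp only [mul_add, mul_neg, Finset.sum_add_distrib, Finset.sum_neg_distrib, mulVec, dotProduct]

theorem Finset.sum_mul_le_single_of_nonpos {ι : Type*} [Fintype ι] (w r : ι → ℝ) (hw : ∀ j, w j ≤ 0)
    (hr : ∀ j, 0 ≤ r j) (i : ι) : ∑ j, w j * r j ≤ w i * r i := by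
  simpa using Finset.sum_le_sum_of_subset_of_nonpos' (Finset.subset_univ {i})
    fun j _ _ => mul_nonpos_of_nonpos_of_nonneg (hw j) (hr j)

/-- Indices are 0-based: `i + 1 < n` is the 1-based `i ≤ n − 1`. -/
theorem cstln_inward_on_off_support_boundaries (n i : ℕ)
    (hi2 : i + 1 < n)
    (ε δ c : ℝ) (hε1 : ε < 1) (hδ : 0 < δ)
    (W : Matrix (Fin n) (Fin n) ℝ)
    (hW : ∀ k l : Fin n, W k l =
      if (k : ℕ) = (l : ℕ) then 0
      else if ((k : ℤ) - (l : ℤ)).natAbs = 1 then -1 + ε else -1 - δ)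
    (α : ℝ)
    (hfeas : c / (1 + δ) ≤ α)
    (k : Fin n) (hk1 : (k : ℕ) ≠ i - 1) (hk2 : (k : ℕ) ≠ i) (hk3 : (k : ℕ) ≠ i + 1)
    (x y : Fin n → ℝ) (hy : ∀ j, y j = W.mulVec x j + c)
    (hyk : y k = 0)
    (hyi : α ≤ y ⟨i, by omega⟩) :
    (∑ j, W k j * (-(x j) + max (y j) 0)) ≤ 0 := by
  obtain rfl : W = cstlnMatrix n ε δ := Matrix.ext hW
  set i' : Fin n := ⟨i, by omega⟩
  have hki : cstlnMatrix n ε δ k i' = -1 - δ :=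
    cstlnMatrix.apply_of_two_le_natAbs (by simp only [i']; omega)
  have hcα : c ≤ (1 + δ) * α := by rwa [div_le_iff₀' (by linarith)] at hfeas
  calc ∑ j, cstlnMatrix n ε δ k j * (-x j + max (y j) 0)
      = c + ∑ j, cstlnMatrix n ε δ k j * max (y j) 0 := by
        rw [Matrix.sum_mul_neg_add]; linarith [hy k]
    _ ≤ c + cstlnMatrix n ε δ k i' * max (y i') 0 := by
        gcongr
        exact Finset.sum_mul_le_single_of_nonpos _ _
          (cstlnMatrix.apply_nonpos hε1.le (by linarith) k) (fun j => le_max_right _ _) i'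
    _ ≤ 0 := by rw [hki]; nlinarith [le_max_left (y i') 0]
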